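/- arXiv:1009.4535 — 2 statements merged into one kernel-verified Lean document; each statement's English description precedes it below -/
import Mathlib

section
/- For every integer n ≥ 3, the polynomials g_n(y) = Σ_{k=0}^{⌊(n-1)/2⌋} Q(n-1,k)·y^k satisfy the identity g_n(y) = g_{n-1}(y) + (n-2)·y·g_{n-2}(y) − 2y²·g'_{n-2}(y), where g' denotes the formal derivative. -/
open Finset

/-- `(i, j)` is an arc of the linear representation of the set partition `P` of
`{1, ..., n}`: `i < j`, both lie in the same block, and no element of that block
lies strictly between them. -/
def IsArc {n : ℕ} (P : Finpartition (Finset.Icc 1 n)) (a : ℕ × ℕ) : Prop :=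
  a.1 < a.2 ∧ ∃ B ∈ P.parts, a.1 ∈ B ∧ a.2 ∈ B ∧ ∀ c ∈ B, ¬ (a.1 < c ∧ c < a.2)

/-- The number of arcs of a set partition. -/
noncomputable def numArcs {n : ℕ} (P : Finpartition (Finset.Icc 1 n)) : ℕ :=
  {a : ℕ × ℕ | IsArc P a}.ncard

/-- A partial matching: every block has at most two elements. -/
def IsMatching {n : ℕ} (P : Finpartition (Finset.Icc 1 n)) : Prop :=
  ∀ B ∈ P.parts, B.card ≤ 2

/-- A neighbor alignment: arcs `(i₁, j₁)`, `(i₂, j₂)` with `i₁ < j₁ < i₂ < j₂`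
and `j₁ + 1 = i₂`. -/
def HasNbrAlign {n : ℕ} (P : Finpartition (Finset.Icc 1 n)) : Prop :=
  ∃ a b : ℕ × ℕ, IsArc P a ∧ IsArc P b ∧ a.2 + 1 = b.1

/-- A left nesting: arcs `(i₁, j₁)`, `(i₂, j₂)` with `i₁ < i₂ < j₂ < j₁`
and `i₁ + 1 = i₂`. -/
def HasLeftNesting {n : ℕ} (P : Finpartition (Finset.Icc 1 n)) : Prop :=
  ∃ a b : ℕ × ℕ, IsArc P a ∧ IsArc P b ∧ a.1 + 1 = b.1 ∧ b.2 < a.2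

/-- A right nesting: arcs `(i₁, j₁)`, `(i₂, j₂)` with `i₁ < i₂ < j₂ < j₁`
and `j₂ + 1 = j₁`. -/
def HasRightNesting {n : ℕ} (P : Finpartition (Finset.Icc 1 n)) : Prop :=
  ∃ a b : ℕ × ℕ, IsArc P a ∧ IsArc P b ∧ a.1 < b.1 ∧ b.2 + 1 = a.2

/-- The number of left crossings: pairs of arcs `(i₁, j₁)`, `(i₂, j₂)` with
`i₁ < i₂ < j₁ < j₂` and `i₁ + 1 = i₂`. -/
noncomputable def numLeftCrossings {n : ℕ} (P : Finpartition (Finset.Icc 1 n)) : ℕ :=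
  {p : (ℕ × ℕ) × (ℕ × ℕ) |
    IsArc P p.1 ∧ IsArc P p.2 ∧ p.1.1 + 1 = p.2.1 ∧ p.2.1 < p.1.2 ∧ p.1.2 < p.2.2}.ncard

/-- The number of transients: elements of a block that are neither the minimum
nor the maximum of their block. -/
noncomputable def numTransients {n : ℕ} (P : Finpartition (Finset.Icc 1 n)) : ℕ :=
  {x : ℕ | ∃ B ∈ P.parts, x ∈ B ∧ (∃ y ∈ B, y < x) ∧ (∃ y ∈ B, x < y)}.ncard

/-- `Pnum n k`: the number of partial matchings of `[n]` with exactly `k` arcs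
and no neighbor alignments. -/
noncomputable def Pnum (n k : ℕ) : ℕ :=
  {P : Finpartition (Finset.Icc 1 n) |
    IsMatching P ∧ numArcs P = k ∧ ¬ HasNbrAlign P}.ncard

/-- `Qnum n k`: the number of partial matchings of `[n]` with exactly `k` arcs,
no neighbor alignments and no left nestings. -/
noncomputable def Qnum (n k : ℕ) : ℕ :=
  {P : Finpartition (Finset.Icc 1 n) |
    IsMatching P ∧ numArcs P = k ∧ ¬ HasNbrAlign P ∧ ¬ HasLeftNesting P}.ncard

/-- `Rnum n k`: the number of partial matchings of `[n]` with exactly `k` arcs,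
no neighbor alignments, no left nestings and no right nestings. -/
noncomputable def Rnum (n k : ℕ) : ℕ :=
  {P : Finpartition (Finset.Icc 1 n) |
    IsMatching P ∧ numArcs P = k ∧ ¬ HasNbrAlign P ∧ ¬ HasLeftNesting P ∧
      ¬ HasRightNesting P}.ncard

/-- `Tnum n k`: the number of set partitions of `[n]` with exactly `k` arcs and
no right nestings. -/
noncomputable def Tnum (n k : ℕ) : ℕ :=
  {P : Finpartition (Finset.Icc 1 n) | numArcs P = k ∧ ¬ HasRightNesting P}.ncard

/-- `Stirling m b`: the Stirling number of the second kind, the number of set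
partitions of `{1, ..., m}` into `b` blocks. -/
noncomputable def Stirling (m b : ℕ) : ℕ :=
  {P : Finpartition (Finset.Icc 1 m) | P.parts.card = b}.ncard

open Polynomial in
/-- The generating polynomial of the numbers `Q(n-1,k)`. -/
noncomputable def gpoly (n : ℕ) : Polynomial ℤ :=
  ∑ k ∈ Finset.range ((n - 1) / 2 + 1),
    Polynomial.C (Qnum (n - 1) k : ℤ) * Polynomial.X ^ k

/-!
Comparing coefficients of `y^(k+1)`, the identity for `n = m + 3` becomes
`Q(m+2, k+1) + 2k Q(m, k) = Q(m+1, k+1) + (m+1) Q(m, k)`.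
A matching of `[m+2]` counted by `Q(m+2, k+1)` either leaves `m+2` unmatched, which gives
`Q(m+1, k+1)`, or contains an arc `(g, m+2)`. Deleting that arc and closing up the two holes gives
a matching counted by `Q(m, k)`, and conversely an arc `(g, m+2)` may be reinserted at each of the
`m+1` places `g` except the `k` places right after a right endpoint (a neighbor alignment) and the
`k` places right before a left endpoint (a left nesting with the new arc). These `2k` places are
distinct because the matching has no neighbor alignment.

A matching is encoded by the finite set of its arcs.
-/

section Matching

variable {n : ℕ} {P Q : Finpartition (Icc 1 n)}

lemma IsMatching.isArc_iff (hP : IsMatching P) {a : ℕ × ℕ} :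
    IsArc P a ↔ a.1 < a.2 ∧ ({a.1, a.2} : Finset ℕ) ∈ P.parts := by
  constructor
  · rintro ⟨hlt, B, hB, h1, h2, -⟩
    have hsub : ({a.1, a.2} : Finset ℕ) ⊆ B := insert_subset h1 (singleton_subset_iff.2 h2)
    have hcard : #({a.1, a.2} : Finset ℕ) = 2 := card_pair hlt.ne
    exact ⟨hlt, (eq_of_subset_of_card_le hsub (hcard ▸ hP B hB)) ▸ hB⟩
  · rintro ⟨hlt, hB⟩
    refine ⟨hlt, _, hB, by simp, by simp, fun c hc => ?_⟩
    simp only [mem_insert, mem_singleton] at hc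
    omega

lemma IsMatching.exists_isArc_eq (hP : IsMatching P) {B : Finset ℕ} (hB : B ∈ P.parts)
    (h2 : #B = 2) : ∃ a, IsArc P a ∧ B = {a.1, a.2} := by
  obtain ⟨x, y, hxy, rfl⟩ := card_eq_two.1 h2
  rcases hxy.lt_or_gt with h | h
  · exact ⟨(x, y), hP.isArc_iff.2 ⟨h, hB⟩, rfl⟩
  · exact ⟨(y, x), hP.isArc_iff.2 ⟨h, pair_comm x y ▸ hB⟩, pair_comm x y⟩

lemma IsMatching.card_eq_one_or_two (hP : IsMatching P) {B : Finset ℕ} (hB : B ∈ P.parts) :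
    #B = 1 ∨ #B = 2 := by
  have := (P.nonempty_of_mem_parts hB).card_pos
  have := hP B hB
  omega

lemma IsMatching.parts_subset (hP : IsMatching P) (hQ : IsMatching Q)
    (h : ∀ a, IsArc P a ↔ IsArc Q a) : P.parts ⊆ Q.parts := by
  intro B hB
  rcases hP.card_eq_one_or_two hB with h1 | h2
  · obtain ⟨x, rfl⟩ := card_eq_one.1 h1
    obtain ⟨C, hC, hxC⟩ := Q.exists_mem (P.le hB (mem_singleton_self x))
    rcases hQ.card_eq_one_or_two hC with hC1 | hC2
    · obtain ⟨y, rfl⟩ := card_eq_one.1 hC1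
      rwa [mem_singleton.1 hxC]
    · obtain ⟨a, ha, rfl⟩ := hQ.exists_isArc_eq hC hC2
      have hx := P.eq_of_mem_parts hB (hP.isArc_iff.1 ((h a).2 ha)).2 (mem_singleton_self x) hxC
      have := congrArg card hx
      rw [card_singleton, card_pair ha.1.ne] at this
      omega
  · obtain ⟨a, ha, rfl⟩ := hP.exists_isArc_eq hB h2
    exact (hQ.isArc_iff.1 ((h a).1 ha)).2

lemma IsMatching.eq_of_isArc_iff (hP : IsMatching P) (hQ : IsMatching Q)
    (h : ∀ a, IsArc P a ↔ IsArc Q a) : P = Q :=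
  Finpartition.ext <| (hP.parts_subset hQ h).antisymm (hQ.parts_subset hP fun a => (h a).symm)

lemma IsMatching.endpoints_ne (hP : IsMatching P) {p q : ℕ × ℕ} (hp : IsArc P p)
    (hq : IsArc P q) (hpq : p ≠ q) : p.1 ≠ q.1 ∧ p.1 ≠ q.2 ∧ p.2 ≠ q.1 ∧ p.2 ≠ q.2 := by
  rw [hP.isArc_iff] at hp hq
  have hne : ({p.1, p.2} : Finset ℕ) ≠ {q.1, q.2} := by
    intro h
    have h1 : q.1 ∈ ({p.1, p.2} : Finset ℕ) := h ▸ mem_insert_self _ _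
    have h2 : q.2 ∈ ({p.1, p.2} : Finset ℕ) := h ▸ by simp
    simp only [mem_insert, mem_singleton] at h1 h2
    exact hpq (Prod.ext (by omega) (by omega))
  have hdisj := disjoint_left.1 (P.disjoint hp.2 hq.2 hne)
  have h1 := hdisj (mem_insert_self p.1 {p.2})
  have h2 := hdisj (by simp : p.2 ∈ ({p.1, p.2} : Finset ℕ))
  simp only [id, mem_insert, mem_singleton, not_or] at h1 h2
  exact ⟨h1.1, h1.2, h2.1, h2.2⟩

end Matching

/-- Distinct arcs share no endpoint, and `(p, q)` is neither a neighbor alignment nor a left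
nesting. -/
def Compatible (p q : ℕ × ℕ) : Prop :=
  (p ≠ q → p.1 ≠ q.1 ∧ p.1 ≠ q.2 ∧ p.2 ≠ q.1 ∧ p.2 ≠ q.2) ∧
    p.2 + 1 ≠ q.1 ∧ ¬ (p.1 + 1 = q.1 ∧ q.2 < p.2)

instance : DecidableRel Compatible := fun p q => by unfold Compatible; infer_instance

def arcSets (m k : ℕ) : Finset (Finset (ℕ × ℕ)) :=
  ((Icc 1 m ×ˢ Icc 1 m).powersetCard k).filter
    fun M => (∀ p ∈ M, p.1 < p.2) ∧ ∀ p ∈ M, ∀ q ∈ M, Compatible p q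

lemma mem_arcSets {m k : ℕ} {M : Finset (ℕ × ℕ)} :
    M ∈ arcSets m k ↔ #M = k ∧ (∀ p ∈ M, 1 ≤ p.1 ∧ p.1 < p.2 ∧ p.2 ≤ m) ∧
      ∀ p ∈ M, ∀ q ∈ M, Compatible p q := by
  simp only [arcSets, mem_filter, mem_powersetCard, subset_iff, mem_product, mem_Icc]
  constructor
  · rintro ⟨⟨hsub, hk⟩, hlt, hc⟩
    exact ⟨hk, fun p hp => ⟨(hsub hp).1.1, hlt p hp, (hsub hp).2.2⟩, hc⟩
  · rintro ⟨hk, hr, hc⟩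
    exact ⟨⟨fun p hp => by have := hr p hp; omega, hk⟩, fun p hp => (hr p hp).2.1, hc⟩

open Classical in
noncomputable def arcFinset {n : ℕ} (P : Finpartition (Icc 1 n)) : Finset (ℕ × ℕ) :=
  (Icc 1 n ×ˢ Icc 1 n).filter (IsArc P)

open Classical in
lemma mem_arcFinset {n : ℕ} {P : Finpartition (Icc 1 n)} {a : ℕ × ℕ} :
    a ∈ arcFinset P ↔ IsArc P a := by
  refine ⟨fun h => (mem_filter.1 h).2, fun h => mem_filter.2 ⟨?_, h⟩⟩
  obtain ⟨-, B, hB, h1, h2, -⟩ := h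
  exact mem_product.2 ⟨P.le hB h1, P.le hB h2⟩

lemma numArcs_eq_card_arcFinset {n : ℕ} (P : Finpartition (Icc 1 n)) :
    numArcs P = #(arcFinset P) := by
  rw [numArcs, ← Set.ncard_coe_finset]
  congr 1
  ext a
  exact mem_arcFinset.symm

lemma arcFinset_mem_arcSets {n k : ℕ} {P : Finpartition (Icc 1 n)} (hP : IsMatching P)
    (hk : numArcs P = k) (hnbr : ¬ HasNbrAlign P) (hnest : ¬ HasLeftNesting P) :
    arcFinset P ∈ arcSets n k := by
  refine mem_arcSets.2 ⟨numArcs_eq_card_arcFinset P ▸ hk, fun p hp => ?_, fun p hp q hq => ?_⟩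
  · obtain ⟨hlt, B, hB, h1, h2, -⟩ := mem_arcFinset.1 hp
    have := mem_Icc.1 (P.le hB h1)
    have := mem_Icc.1 (P.le hB h2)
    omega
  · rw [mem_arcFinset] at hp hq
    exact ⟨hP.endpoints_ne hp hq, fun h => hnbr ⟨p, q, hp, hq, h⟩,
      fun h => hnest ⟨p, q, hp, hq, h⟩⟩

section OfArcs

variable {m : ℕ} {M : Finset (ℕ × ℕ)}

def arcParts (m : ℕ) (M : Finset (ℕ × ℕ)) : Finset (Finset ℕ) :=
  M.image (fun p => {p.1, p.2}) ∪
    ((Icc 1 m).filter fun x => ∀ p ∈ M, x ≠ p.1 ∧ x ≠ p.2).image singleton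

lemma existsUnique_mem_arcParts
    (hdisj : ∀ p ∈ M, ∀ q ∈ M, p ≠ q → p.1 ≠ q.1 ∧ p.1 ≠ q.2 ∧ p.2 ≠ q.1 ∧ p.2 ≠ q.2)
    {x : ℕ} (hx : x ∈ Icc 1 m) :
    ∃! B, B ∈ arcParts m M ∧ x ∈ B := by
  simp only [arcParts, mem_union, mem_image, mem_filter]
  by_cases hend : ∃ p ∈ M, x = p.1 ∨ x = p.2
  · obtain ⟨p, hp, hxp⟩ := hend
    refine ⟨{p.1, p.2}, ⟨Or.inl ⟨p, hp, rfl⟩, by simp [hxp]⟩, ?_⟩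
    rintro B ⟨⟨q, hq, rfl⟩ | ⟨y, ⟨-, hy⟩, rfl⟩, hxB⟩
    · obtain rfl : q = p := by
        by_contra hqp
        have := hdisj q hq p hp hqp
        simp only [mem_insert, mem_singleton] at hxB
        omega
      rfl
    · have := hy p hp
      simp only [mem_singleton] at hxB
      omega
  · push Not at hend
    refine ⟨{x}, ⟨Or.inr ⟨x, ⟨hx, fun p hp => hend p hp⟩, rfl⟩, mem_singleton_self x⟩, ?_⟩
    rintro B ⟨⟨q, hq, rfl⟩ | ⟨y, -, rfl⟩, hxB⟩
    · have := hend q hq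
      simp only [mem_insert, mem_singleton] at hxB
      omega
    · rw [mem_singleton.1 hxB]

variable (hrange : ∀ p ∈ M, 1 ≤ p.1 ∧ p.1 < p.2 ∧ p.2 ≤ m)
  (hdisj : ∀ p ∈ M, ∀ q ∈ M, p ≠ q → p.1 ≠ q.1 ∧ p.1 ≠ q.2 ∧ p.2 ≠ q.1 ∧ p.2 ≠ q.2)

noncomputable def ofArcs : Finpartition (Icc 1 m) :=
  .ofExistsUnique (arcParts m M)
    (by
      simp only [arcParts, mem_union, mem_image, mem_filter]
      rintro B (⟨p, hp, rfl⟩ | ⟨x, ⟨hx, -⟩, rfl⟩)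
      · have := hrange p hp
        intro y hy
        simp only [mem_insert, mem_singleton] at hy
        simp only [mem_Icc]
        omega
      · exact singleton_subset_iff.2 hx)
    (fun _ hx => existsUnique_mem_arcParts hdisj hx)
    (by simp [arcParts])

lemma isMatching_ofArcs : IsMatching (ofArcs hrange hdisj) := by
  simp only [IsMatching, ofArcs, Finpartition.ofExistsUnique_parts, arcParts, mem_union, mem_image]
  rintro B (⟨p, -, rfl⟩ | ⟨x, -, rfl⟩)
  · exact card_le_two
  · simp

lemma isArc_ofArcs_iff {a : ℕ × ℕ} : IsArc (ofArcs hrange hdisj) a ↔ a ∈ M := by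
  rw [(isMatching_ofArcs hrange hdisj).isArc_iff]
  simp only [ofArcs, Finpartition.ofExistsUnique_parts, arcParts, mem_union, mem_image]
  constructor
  · rintro ⟨hlt, ⟨p, hp, hpa⟩ | ⟨x, -, hxa⟩⟩
    · have := hrange p hp
      have h1 : a.1 ∈ ({p.1, p.2} : Finset ℕ) := hpa ▸ mem_insert_self _ _
      have h2 : a.2 ∈ ({p.1, p.2} : Finset ℕ) := hpa ▸ by simp
      simp only [mem_insert, mem_singleton] at h1 h2
      obtain rfl : a = p := Prod.ext (by omega) (by omega)
      exact hp
    · have h1 : a.1 ∈ ({x} : Finset ℕ) := hxa ▸ mem_insert_self _ _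
      have h2 : a.2 ∈ ({x} : Finset ℕ) := hxa ▸ by simp
      simp only [mem_singleton] at h1 h2
      omega
  · intro ha
    exact ⟨(hrange a ha).2.1, Or.inl ⟨a, ha, rfl⟩⟩

end OfArcs

theorem Qnum_eq_card_arcSets (m k : ℕ) : Qnum m k = #(arcSets m k) := by
  rw [Qnum, ← Set.ncard_coe_finset]
  refine Set.ncard_congr (fun P _ => arcFinset P) ?_ ?_ ?_
  · exact fun P ⟨hP, hk, hnbr, hnest⟩ => arcFinset_mem_arcSets hP hk hnbr hnest
  · rintro P Q ⟨hP, -⟩ ⟨hQ, -⟩ h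
    exact hP.eq_of_isArc_iff hQ fun a => by rw [← mem_arcFinset, ← mem_arcFinset, h]
  · intro M hM
    obtain ⟨hk, hrange, hc⟩ := mem_arcSets.1 hM
    have hdisj := fun p hp q hq => (hc p hp q hq).1
    have harcs : arcFinset (ofArcs hrange hdisj) = M := by
      ext a; rw [mem_arcFinset, isArc_ofArcs_iff]
    refine ⟨ofArcs hrange hdisj, ⟨isMatching_ofArcs hrange hdisj, ?_, ?_, ?_⟩, harcs⟩
    · rw [numArcs_eq_card_arcFinset, harcs, hk]
    · rintro ⟨p, q, hp, hq, h⟩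
      rw [isArc_ofArcs_iff] at hp hq
      exact (hc p hp q hq).2.1 h
    · rintro ⟨p, q, hp, hq, h⟩
      rw [isArc_ofArcs_iff] at hp hq
      exact (hc p hp q hq).2.2 h

/-- `Fin.succAbove` on `ℕ`: the relabelling that frees the position `g`. -/
def succAbove (g x : ℕ) : ℕ := if x < g then x else x + 1

def predAbove (g x : ℕ) : ℕ := if g < x then x - 1 else x

lemma succAbove_cases (g x : ℕ) :
    x < g ∧ succAbove g x = x ∨ g ≤ x ∧ succAbove g x = x + 1 := by
  unfold succAbove; split_ifs <;> omega

lemma succAbove_predAbove {g x : ℕ} (h : x ≠ g) : succAbove g (predAbove g x) = x := by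
  unfold succAbove predAbove; split_ifs <;> omega

lemma succAbove_injective (g : ℕ) : Function.Injective (succAbove g) := fun x y h => by
  rcases succAbove_cases g x with hx | hx <;> rcases succAbove_cases g y with hy | hy <;> omega

lemma compatible_map_succAbove {g : ℕ} {p q : ℕ × ℕ} (hq : q.1 ≠ g) :
    Compatible (Prod.map (succAbove g) (succAbove g) p) (Prod.map (succAbove g) (succAbove g) q)
      ↔ Compatible p q := by
  unfold Compatible
  rw [((succAbove_injective g).prodMap (succAbove_injective g)).ne_iff]
  simp only [Prod.map_fst, Prod.map_snd, Ne, Prod.ext_iff]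
  have := succAbove_cases g p.1
  have := succAbove_cases g p.2
  have := succAbove_cases g q.1
  have := succAbove_cases g q.2
  omega

lemma succAbove_ne (g x : ℕ) : succAbove g x ≠ g := by
  rcases succAbove_cases g x with h | h <;> omega

def insertArc (g t : ℕ) (M : Finset (ℕ × ℕ)) : Finset (ℕ × ℕ) :=
  insert (g, t) (M.image (Prod.map (succAbove g) (succAbove g)))

def gaps (m : ℕ) (M : Finset (ℕ × ℕ)) : Finset ℕ :=
  (Icc 1 (m + 1)).filter fun g => ∀ p ∈ M, p.1 ≠ g ∧ p.2 + 1 ≠ g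

lemma notMem_image_map_succAbove (g t : ℕ) (M : Finset (ℕ × ℕ)) :
    (g, t) ∉ M.image (Prod.map (succAbove g) (succAbove g)) := by
  simp only [mem_image, not_exists, not_and]
  exact fun p _ h => succAbove_ne g p.1 (congrArg Prod.fst h)

lemma card_insertArc (g t : ℕ) (M : Finset (ℕ × ℕ)) : #(insertArc g t M) = #M + 1 := by
  rw [insertArc, card_insert_of_notMem (notMem_image_map_succAbove g t M),
    card_image_of_injective _ ((succAbove_injective g).prodMap (succAbove_injective g))]

lemma range_compatible_map_succAbove_iff {m g : ℕ} (hg : 1 ≤ g ∧ g ≤ m + 1) {p : ℕ × ℕ} :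
    (1 ≤ succAbove g p.1 ∧ succAbove g p.1 < succAbove g p.2 ∧ succAbove g p.2 ≤ m + 2) ∧
        Compatible (g, m + 2) (Prod.map (succAbove g) (succAbove g) p) ∧
        Compatible (Prod.map (succAbove g) (succAbove g) p) (g, m + 2) ↔
      (1 ≤ p.1 ∧ p.1 < p.2 ∧ p.2 ≤ m) ∧ p.1 ≠ g ∧ p.2 + 1 ≠ g := by
  simp only [Compatible, Prod.map_fst, Prod.map_snd, Ne, Prod.ext_iff]
  have := succAbove_cases g p.1
  have := succAbove_cases g p.2
  omega

lemma insertArc_mem_arcSets_iff {m k g : ℕ} {M : Finset (ℕ × ℕ)} :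
    insertArc g (m + 2) M ∈ arcSets (m + 2) (k + 1) ↔ M ∈ arcSets m k ∧ g ∈ gaps m M := by
  rw [mem_arcSets, mem_arcSets, card_insertArc, add_left_inj]
  simp only [insertArc, forall_mem_insert, forall_mem_image, gaps, mem_filter, mem_Icc,
    Prod.map_fst, Prod.map_snd]
  constructor
  · rintro ⟨hk, ⟨ha, hrange⟩, ⟨-, hleft⟩, hright⟩
    have hg : 1 ≤ g ∧ g ≤ m + 1 := by omega
    have key p (hp : p ∈ M) := (range_compatible_map_succAbove_iff hg).1
      ⟨hrange hp, hleft hp, (hright hp).1⟩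
    exact ⟨⟨hk, fun p hp => (key p hp).1, fun p hp q hq =>
      (compatible_map_succAbove (key q hq).2.1).1 ((hright hp).2 hq)⟩, hg,
      fun p hp => (key p hp).2⟩
  · rintro ⟨⟨hk, hrange, hcompat⟩, hg, hgap⟩
    have key p (hp : p ∈ M) := (range_compatible_map_succAbove_iff hg).2 ⟨hrange p hp, hgap p hp⟩
    refine ⟨hk, ⟨by omega, fun p hp => (key p hp).1⟩, ⟨⟨fun h => absurd rfl h, by omega, by omega⟩,
      fun q hq => (key q hq).2.1⟩, fun p hp => ⟨(key p hp).2.2, fun q hq => ?_⟩⟩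
    exact (compatible_map_succAbove (hgap q hq).1).2 (hcompat p hp q hq)

section Counting

variable {m k : ℕ} {M : Finset (ℕ × ℕ)}

lemma card_image_of_mem_arcSets {f : ℕ × ℕ → ℕ}
    (hf : ∀ p q : ℕ × ℕ, p ≠ q → p.1 ≠ q.1 ∧ p.1 ≠ q.2 ∧ p.2 ≠ q.1 ∧ p.2 ≠ q.2 → f p ≠ f q)
    (hM : M ∈ arcSets m k) : #(M.image f) = k := by
  obtain ⟨hk, -, hc⟩ := mem_arcSets.1 hM
  rw [← hk]
  refine card_image_of_injOn fun p hp q hq h => ?_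
  by_contra hpq
  exact hf p q hpq ((hc p hp q hq).1 hpq) h

lemma two_mul_le_of_mem_arcSets (hM : M ∈ arcSets m k) : 2 * k ≤ m := by
  obtain ⟨-, hrange, hc⟩ := mem_arcSets.1 hM
  have hdisj : Disjoint (M.image Prod.fst) (M.image Prod.snd) := by
    simp only [disjoint_left, mem_image, not_exists, not_and]
    rintro - ⟨p, hp, rfl⟩ q hq h
    obtain rfl | hpq := eq_or_ne q p
    · exact (hrange q hq).2.1.ne' h
    · exact ((hc q hq p hp).1 hpq).2.2.1 h
  have hsub : M.image Prod.fst ∪ M.image Prod.snd ⊆ Icc 1 m := by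
    intro x hx
    rw [mem_union, mem_image, mem_image] at hx
    rcases hx with ⟨p, hp, rfl⟩ | ⟨p, hp, rfl⟩ <;> have := hrange p hp <;> rw [mem_Icc] <;> omega
  have := card_le_card hsub
  rw [card_union_of_disjoint hdisj, card_image_of_mem_arcSets (fun _ _ _ h => h.1) hM,
    card_image_of_mem_arcSets (fun _ _ _ h => h.2.2.2) hM, Nat.card_Icc] at this
  omega

lemma card_gaps_add (hM : M ∈ arcSets m k) : #(gaps m M) + 2 * k = m + 1 := by
  obtain ⟨-, hrange, hc⟩ := mem_arcSets.1 hM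
  have hgaps : gaps m M = Icc 1 (m + 1) \ (M.image Prod.fst ∪ M.image (·.2 + 1)) := by
    ext g
    simp only [gaps, mem_filter, mem_sdiff, mem_union, mem_image, not_or, not_exists, not_and]
    exact and_congr_right fun _ => ⟨fun h => ⟨fun p hp => (h p hp).1, fun p hp => (h p hp).2⟩,
      fun h p hp => ⟨h.1 p hp, h.2 p hp⟩⟩
  have hdisj : Disjoint (M.image Prod.fst) (M.image (·.2 + 1)) := by
    simp only [disjoint_left, mem_image, not_exists, not_and]
    rintro - ⟨p, hp, rfl⟩ q hq h
    exact (hc q hq p hp).2.1 h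
  have hsub : M.image Prod.fst ∪ M.image (·.2 + 1) ⊆ Icc 1 (m + 1) := by
    intro x hx
    rw [mem_union, mem_image, mem_image] at hx
    rcases hx with ⟨p, hp, rfl⟩ | ⟨p, hp, rfl⟩ <;> have := hrange p hp <;> rw [mem_Icc] <;> omega
  rw [hgaps, card_sdiff_of_subset hsub, card_union_of_disjoint hdisj,
    card_image_of_mem_arcSets (fun _ _ _ h => h.1) hM,
    card_image_of_mem_arcSets (fun _ _ _ h => by omega) hM, Nat.card_Icc]
  have := two_mul_le_of_mem_arcSets hM
  omega

lemma insertArc_inj {g g' : ℕ} {M' : Finset (ℕ × ℕ)} (hM' : ∀ p ∈ M', p.2 ≤ m)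
    (h : insertArc g (m + 2) M = insertArc g' (m + 2) M') : g = g' ∧ M = M' := by
  obtain rfl : g = g' := by
    have hmem : (g, m + 2) ∈ insertArc g' (m + 2) M' := h ▸ mem_insert_self _ _
    rcases mem_insert.1 hmem with h' | h'
    · exact congrArg Prod.fst h'
    · obtain ⟨p, hp, hpe⟩ := mem_image.1 h'
      have := hM' p hp
      have := succAbove_cases g' p.2
      have := congrArg Prod.snd hpe
      simp only [Prod.map_snd] at this
      omega
  refine ⟨rfl, image_injective ((succAbove_injective g).prodMap (succAbove_injective g)) ?_⟩
  have := congrArg (·.erase (g, m + 2)) h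
  simpa only [insertArc, erase_insert (notMem_image_map_succAbove _ _ _)] using this

lemma insertArc_erase_map_predAbove {t i : ℕ} (hM : ∀ p ∈ M, ∀ q ∈ M, Compatible p q)
    (hi : (i, t) ∈ M) :
    insertArc i t ((M.erase (i, t)).image (Prod.map (predAbove i) (predAbove i))) = M := by
  rw [insertArc, image_image]
  conv_rhs => rw [← insert_erase hi, ← image_id (s := M.erase (i, t))]
  congr 1
  refine image_congr fun p hp => ?_
  obtain ⟨hne, hp⟩ := mem_erase.1 hp
  obtain ⟨h1, -, h2, -⟩ := (hM p hp (i, t) hi).1 hne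
  exact Prod.ext (succAbove_predAbove h1) (succAbove_predAbove h2)

lemma card_filter_exists_snd_eq :
    #{M ∈ arcSets (m + 2) (k + 1) | ∃ p ∈ M, p.2 = m + 2} = #((arcSets m k).sigma (gaps m)) := by
  refine (card_bij (fun a _ => insertArc a.2 (m + 2) a.1) ?_ ?_ ?_).symm
  · rintro ⟨M, g⟩ ha
    rw [mem_sigma] at ha
    exact mem_filter.2 ⟨insertArc_mem_arcSets_iff.2 ha, (g, m + 2), mem_insert_self _ _, rfl⟩
  · rintro ⟨M, g⟩ - ⟨M', g'⟩ ha' h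
    have hM' := (mem_arcSets.1 (mem_sigma.1 ha').1).2.1
    obtain ⟨rfl, rfl⟩ := insertArc_inj (fun p hp => (hM' p hp).2.2) h
    rfl
  · intro M hM
    obtain ⟨hM, p, hp, hpm⟩ := mem_filter.1 hM
    obtain ⟨i, _⟩ := p
    subst hpm
    have heq := insertArc_erase_map_predAbove (mem_arcSets.1 hM).2.2 hp
    rw [← heq] at hM
    exact ⟨⟨_, i⟩, mem_sigma.2 (insertArc_mem_arcSets_iff.1 hM), heq⟩

lemma filter_not_exists_snd_eq :
    {M ∈ arcSets (m + 2) k | ¬ ∃ p ∈ M, p.2 = m + 2} = arcSets (m + 1) k := by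
  ext M
  simp only [mem_filter, mem_arcSets, not_exists, not_and]
  constructor
  · rintro ⟨⟨hk, hrange, hc⟩, htop⟩
    exact ⟨hk, fun p hp => by have := hrange p hp; have := htop p hp; omega, hc⟩
  · rintro ⟨hk, hrange, hc⟩
    exact ⟨⟨hk, fun p hp => by have := hrange p hp; omega, hc⟩,
      fun p hp => by have := hrange p hp; omega⟩

theorem card_arcSets_add_two :
    #(arcSets (m + 2) (k + 1)) + 2 * k * #(arcSets m k) =
      #(arcSets (m + 1) (k + 1)) + (m + 1) * #(arcSets m k) := by
  have hsum : ∑ M ∈ arcSets m k, (#(gaps m M) + 2 * k) = (m + 1) * #(arcSets m k) := by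
    rw [sum_congr rfl fun M hM => card_gaps_add hM, sum_const, smul_eq_mul, mul_comm]
  rw [← card_filter_add_card_filter_not (fun M => ∃ p ∈ M, p.2 = m + 2),
    filter_not_exists_snd_eq, card_filter_exists_snd_eq, card_sigma, ← hsum, sum_add_distrib,
    sum_const, smul_eq_mul]
  ring

end Counting

lemma arcSets_zero (m : ℕ) : arcSets m 0 = {∅} := by
  ext M
  rw [mem_arcSets, mem_singleton, card_eq_zero]
  constructor
  · exact fun h => h.1
  · rintro rfl
    simp

theorem Qnum_zero (m : ℕ) : Qnum m 0 = 1 := by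
  rw [Qnum_eq_card_arcSets, arcSets_zero, card_singleton]

theorem Qnum_eq_zero_of_lt {m k : ℕ} (h : m < 2 * k) : Qnum m k = 0 := by
  rw [Qnum_eq_card_arcSets, card_eq_zero, eq_empty_iff_forall_notMem]
  exact fun M hM => absurd (two_mul_le_of_mem_arcSets hM) (not_le.2 h)

theorem Qnum_add_two (m k : ℕ) :
    Qnum (m + 2) (k + 1) + 2 * k * Qnum m k = Qnum (m + 1) (k + 1) + (m + 1) * Qnum m k := by
  simp only [Qnum_eq_card_arcSets, card_arcSets_add_two]

section Polynomial

open Polynomial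

lemma Polynomial.coeff_X_mul_derivative {R : Type*} [Semiring R] (p : R[X]) (k : ℕ) :
    (X * derivative p).coeff k = p.coeff k * k := by
  rcases k with _ | k
  · simp
  · rw [coeff_X_mul, coeff_derivative, Nat.cast_succ]

lemma coeff_gpoly (n k : ℕ) : (gpoly n).coeff k = Qnum (n - 1) k := by
  simp only [gpoly, finsetSum_coeff, coeff_C_mul, coeff_X_pow, mul_ite, mul_one, mul_zero,
    sum_ite_eq, mem_range]
  split_ifs with h
  · rfl
  · rw [Qnum_eq_zero_of_lt (by omega), Nat.cast_zero]

end Polynomial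

open Polynomial in
/-- Recurrence for the polynomials `g_n(y) = ∑_k Q(n-1,k) y^k`. -/
theorem stmt_7 (n : ℕ) (hn : 3 ≤ n) :
    gpoly n = gpoly (n - 1) + Polynomial.C ((n : ℤ) - 2) * Polynomial.X * gpoly (n - 2)
      - 2 * Polynomial.X ^ 2 * Polynomial.derivative (gpoly (n - 2)) := by
  obtain ⟨m, rfl⟩ : ∃ m, n = m + 3 := ⟨n - 3, by omega⟩
  simp only [Nat.reduceSubDiff]
  suffices gpoly (m + 3) = gpoly (m + 2) +
      X * (C ((m + 1 : ℕ) : ℤ) * gpoly (m + 1) - 2 * (X * derivative (gpoly (m + 1)))) by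
    rw [this, show ((m + 3 : ℕ) : ℤ) - 2 = (m + 1 : ℕ) by push_cast; ring]
    ring
  ext (_ | k)
  · simp [coeff_gpoly, Qnum_zero]
  · simp only [coeff_add, coeff_X_mul, coeff_sub, coeff_C_mul, coeff_ofNat_mul,
      coeff_X_mul_derivative, coeff_gpoly, Nat.reduceSubDiff, Nat.add_sub_cancel, Nat.cast_succ]
    have := Qnum_add_two m k
    zify at this
    linear_combination this
end

section
/- For every integer n ≥ 1, the total number of partial matchings of [n-1] avoiding both neighbor alignments and left nestings equals Σ_{k=0}^{⌊(n-1)/2⌋} S(n-k, n-2k), where S denotes the Stirling numbers of the second kind. -/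
/-!
Encode a set partition of `{1, ..., s}` by its arcs, the pairs of consecutive elements of a block:
every point starts at most one arc and ends at most one, and the number of blocks is `s` minus the
number of arcs. Deleting the arc that ends at the last point gives the Stirling recurrence
`S(s + 1, b + 1) = S(s, b) + (b + 1) S(s, b + 1)`. For the number `Q(m, k)` of matchings of `[m]`
with `k` arcs and neither neighbor alignments nor left nestings, deleting the arc `(t, m + 2)`
together with the point `t` gives `Q(m + 2, k + 1) = Q(m + 1, k + 1) + (m + 1 - 2k) Q(m, k)`:
`t` may be any point that is neither a left endpoint nor directly after a right endpoint. Both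
recurrences and their boundary values match under `Q(2k + j, k) = S(k + j + 1, j + 1)`, and
summing over `k` gives the theorem.
-/

open Finset

theorem Finpartition.ext_of_part {α : Type*} [DecidableEq α] {s : Finset α}
    {P Q : Finpartition s} (h : ∀ x ∈ s, P.part x = Q.part x) : P = Q := by
  have key : ∀ {P Q : Finpartition s}, (∀ x ∈ s, P.part x = Q.part x) → P.parts ⊆ Q.parts :=
    fun {P₁ Q₁} h B hB => by
      obtain ⟨x, hx, rfl⟩ := P₁.part_surjOn hB
      exact h x hx ▸ Q₁.part_mem.2 hx
  exact Finpartition.ext (subset_antisymm (key h) (key fun x hx => (h x hx).symm))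

theorem Finset.exists_lt_lt_of_two_lt_card {α : Type*} [LinearOrder α] {B : Finset α}
    (h : 2 < #B) : ∃ x ∈ B, ∃ y ∈ B, ∃ z ∈ B, x < y ∧ y < z := by
  have hB : B.Nonempty := card_pos.1 (by omega)
  obtain ⟨y, hy⟩ : ((B.erase (B.min' hB)).erase (B.max' hB)).Nonempty := by
    have h₁ := pred_card_le_card_erase (s := B) (a := B.min' hB)
    have h₂ := pred_card_le_card_erase (s := B.erase (B.min' hB)) (a := B.max' hB)
    exact card_pos.1 (by omega)
  obtain ⟨hyz, hy⟩ := mem_erase.1 hy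
  obtain ⟨hxy, hy⟩ := mem_erase.1 hy
  exact ⟨_, B.min'_mem hB, y, hy, _, B.max'_mem hB, lt_of_le_of_ne (B.min'_le y hy) (Ne.symm hxy),
    lt_of_le_of_ne (B.le_max' y hy) hyz⟩

namespace ArcDiagram

open Finset
open scoped Classical

/-- The arc sets of set partitions of `{1, ..., s}`; `arcs` and `ofArcs` below are mutually
inverse. -/
structure IsArcSet (s : ℕ) (A : Finset (ℕ × ℕ)) : Prop where
  bounds : ∀ a ∈ A, 1 ≤ a.1 ∧ a.1 < a.2 ∧ a.2 ≤ s
  injOn_fst : Set.InjOn Prod.fst (A : Set (ℕ × ℕ))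
  injOn_snd : Set.InjOn Prod.snd (A : Set (ℕ × ℕ))

noncomputable def arcSets (s : ℕ) : Finset (Finset (ℕ × ℕ)) :=
  {A ∈ (Icc 1 s ×ˢ Icc 1 s).powerset | IsArcSet s A}

section ArcSets

variable {s j : ℕ} {A : Finset (ℕ × ℕ)}

theorem mem_arcSets : A ∈ arcSets s ↔ IsArcSet s A := by
  refine mem_filter.trans (and_iff_right_of_imp fun hA => mem_powerset.2 fun a ha => ?_)
  have := hA.bounds a ha
  simp only [mem_product, mem_Icc]
  omega

theorem isArcSet_empty (s : ℕ) : IsArcSet s ∅ :=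
  ⟨by simp, by simp, by simp⟩

theorem arcSets_zero : arcSets 0 = {∅} := by
  ext A
  simp only [mem_arcSets, mem_singleton]
  refine ⟨fun hA => eq_empty_of_forall_notMem fun a ha => ?_, fun h => h ▸ isArcSet_empty 0⟩
  have := hA.bounds a ha
  omega

theorem IsArcSet.fst_mem_Icc (hA : IsArcSet s A) {a : ℕ × ℕ} (ha : a ∈ A) : a.1 ∈ Icc 1 s := by
  have := hA.bounds a ha
  simp only [mem_Icc]
  omega

theorem IsArcSet.snd_mem_Icc (hA : IsArcSet s A) {a : ℕ × ℕ} (ha : a ∈ A) : a.2 ∈ Icc 2 s := by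
  have := hA.bounds a ha
  simp only [mem_Icc]
  omega

theorem IsArcSet.card_image_fst (hA : IsArcSet s A) : #(A.image Prod.fst) = #A :=
  card_image_of_injOn hA.injOn_fst

theorem IsArcSet.card_image_snd (hA : IsArcSet s A) : #(A.image Prod.snd) = #A :=
  card_image_of_injOn hA.injOn_snd

theorem IsArcSet.card_lt (hA : IsArcSet s A) (hs : 1 ≤ s) : #A < s := by
  have := card_le_card (s := A.image Prod.snd) (t := Icc 2 s) fun x hx => by
    obtain ⟨a, ha, rfl⟩ := mem_image.1 hx
    exact hA.snd_mem_Icc ha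
  rw [hA.card_image_snd, Nat.card_Icc] at this
  omega

theorem IsArcSet.card_sdiff_image_fst (hA : IsArcSet s A) :
    #(Icc 1 s \ A.image Prod.fst) = s - #A := by
  rw [card_sdiff_of_subset, hA.card_image_fst, Nat.card_Icc, Nat.add_sub_cancel]
  intro x hx
  obtain ⟨a, ha, rfl⟩ := mem_image.1 hx
  exact hA.fst_mem_Icc ha

theorem IsArcSet.subset (hA : IsArcSet s A) {A' : Finset (ℕ × ℕ)} (h : A' ⊆ A) :
    IsArcSet s A' :=
  ⟨fun a ha => hA.bounds a (h ha), hA.injOn_fst.mono (coe_subset.2 h),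
    hA.injOn_snd.mono (coe_subset.2 h)⟩

theorem IsArcSet.mono (hA : IsArcSet s A) : IsArcSet (s + 1) A :=
  ⟨fun a ha => by have := hA.bounds a ha; omega, hA.injOn_fst, hA.injOn_snd⟩

theorem IsArcSet.of_succ (hA : IsArcSet (s + 1) A) (h : ∀ a ∈ A, a.2 ≠ s + 1) : IsArcSet s A :=
  ⟨fun a ha => by have := hA.bounds a ha; have := h a ha; omega, hA.injOn_fst, hA.injOn_snd⟩

/-- Arc sets on `{1, ..., s + 1}` in which `s + 1` is not a right endpoint are the arc sets
on `{1, ..., s}`. -/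
theorem card_filter_arcSets_succ (p : Finset (ℕ × ℕ) → Prop) [DecidablePred p] :
    #{A ∈ arcSets (s + 1) | p A} =
      #{A ∈ arcSets s | p A} + #{A ∈ arcSets (s + 1) | p A ∧ ∃ j, (j, s + 1) ∈ A} := by
  rw [← card_filter_add_card_filter_not (fun A => ∃ j, (j, s + 1) ∈ A), add_comm,
    filter_filter, filter_filter]
  congr 2
  ext A
  simp only [mem_filter, mem_arcSets, not_exists]
  refine ⟨fun ⟨hA, hp, h⟩ => ⟨hA.of_succ fun a ha h' => h a.1 (h' ▸ ha), hp⟩,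
    fun ⟨hA, hp⟩ => ⟨hA.mono, hp, fun j hj => ?_⟩⟩
  have := hA.bounds _ hj
  omega

theorem insert_injective_of_snd_lt {N t t' : ℕ} {A A' : Finset (ℕ × ℕ)}
    (hA : ∀ a ∈ A, a.2 < N) (hA' : ∀ a ∈ A', a.2 < N)
    (h : insert (t, N) A = insert (t', N) A') : t = t' ∧ A = A' := by
  have key : ∀ {A : Finset (ℕ × ℕ)} {t}, (∀ a ∈ A, a.2 < N) →
      {a ∈ insert (t, N) A | a.2 < N} = A := fun hA => by
    rw [filter_insert, if_neg (lt_irrefl N), filter_true_of_mem hA]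
  refine ⟨?_, by rw [← key hA, h, key hA']⟩
  rcases mem_insert.1 (h ▸ mem_insert_self (t, N) A) with h' | h'
  · exact (Prod.ext_iff.1 h').1
  · exact absurd (hA' _ h') (lt_irrefl N)

theorem IsArcSet.insert_last (hA : IsArcSet s A) (hj : j ∈ Icc 1 s)
    (hj' : j ∉ A.image Prod.fst) : IsArcSet (s + 1) (insert (j, s + 1) A) := by
  have hnotMem : (j, s + 1) ∉ A := fun h => by have := hA.bounds _ h; omega
  refine ⟨forall_mem_insert _ _ _ |>.2 ⟨?_, fun a ha => ?_⟩, ?_, ?_⟩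
  · simp only [mem_Icc] at hj
    omega
  · have := hA.bounds a ha
    omega
  · rw [coe_insert, Set.injOn_insert (mem_coe.not.2 hnotMem), ← coe_image, mem_coe]
    exact ⟨hA.injOn_fst, hj'⟩
  · rw [coe_insert, Set.injOn_insert (mem_coe.not.2 hnotMem)]
    refine ⟨hA.injOn_snd, fun ⟨a, ha, h⟩ => ?_⟩
    have := hA.bounds a ha
    simp only at h
    omega

theorem IsArcSet.erase_last {B : Finset (ℕ × ℕ)} (hB : IsArcSet (s + 1) B) (h : (j, s + 1) ∈ B) :
    IsArcSet s (B.erase (j, s + 1)) ∧ j ∈ Icc 1 s ∧ j ∉ (B.erase (j, s + 1)).image Prod.fst := by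
  refine ⟨(hB.subset (erase_subset _ _)).of_succ fun a ha h' => ?_, ?_, fun hj => ?_⟩
  · exact (mem_erase.1 ha).1 (hB.injOn_snd (mem_of_mem_erase ha) h h')
  · have := hB.bounds _ h
    simp only [mem_Icc]
    omega
  · obtain ⟨a, ha, h'⟩ := mem_image.1 hj
    exact (mem_erase.1 ha).1 (hB.injOn_fst (mem_of_mem_erase ha) h h')

end ArcSets

def Reach (A : Finset (ℕ × ℕ)) : ℕ → ℕ → Prop :=
  Relation.ReflTransGen fun u v => (u, v) ∈ A

def Linked (A : Finset (ℕ × ℕ)) (x y : ℕ) : Prop :=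
  Reach A x y ∨ Reach A y x

section Linked

variable {s : ℕ} {A : Finset (ℕ × ℕ)}

theorem IsArcSet.le_of_reach (hA : IsArcSet s A) {x y : ℕ} (h : Reach A x y) : x ≤ y := by
  induction h with
  | refl => rfl
  | tail _ hbc ih => have := hA.bounds _ hbc; omega

/-- Arcs leaving a point are unique, so two walks from the same point are comparable. -/
theorem IsArcSet.reach_or_reach_of_reach_left (hA : IsArcSet s A) {x y z : ℕ}
    (hxy : Reach A x y) (hxz : Reach A x z) : Reach A y z ∨ Reach A z y := by
  induction hxy using Relation.ReflTransGen.head_induction_on with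
  | refl => exact Or.inl hxz
  | head hxw _ ih =>
    rcases Relation.ReflTransGen.cases_head hxz with rfl | ⟨w', hxw', hw'z⟩
    · exact Or.inr (Relation.ReflTransGen.head hxw ‹_›)
    · obtain rfl : _ = w' := congrArg Prod.snd (hA.injOn_fst hxw hxw' rfl)
      exact ih hw'z

theorem IsArcSet.reach_or_reach_of_reach_right (hA : IsArcSet s A) {x y z : ℕ}
    (hyx : Reach A y x) (hzx : Reach A z x) : Reach A y z ∨ Reach A z y := by
  induction hyx with
  | refl => exact Or.inr hzx
  | tail hyw hwx ih =>
    rcases Relation.ReflTransGen.cases_tail hzx with rfl | ⟨w', hzw', hw'x⟩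
    · exact Or.inl (Relation.ReflTransGen.tail hyw hwx)
    · obtain rfl : w' = _ := congrArg Prod.fst (hA.injOn_snd hw'x hwx rfl)
      exact ih hzw'

theorem IsArcSet.linked_trans (hA : IsArcSet s A) {x y z : ℕ} :
    Linked A x y → Linked A y z → Linked A x z
  | .inl h₁, .inl h₂ => .inl (h₁.trans h₂)
  | .inl h₁, .inr h₂ => hA.reach_or_reach_of_reach_right h₁ h₂
  | .inr h₁, .inl h₂ => hA.reach_or_reach_of_reach_left h₁ h₂
  | .inr h₁, .inr h₂ => .inr (h₂.trans h₁)

def IsArcSet.setoid (hA : IsArcSet s A) : Setoid ℕ where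
  r := Linked A
  iseqv := ⟨fun _ => .inl .refl, Or.symm, hA.linked_trans⟩

noncomputable def ofArcs (hA : IsArcSet s A) : Finpartition (Icc 1 s) :=
  Finpartition.ofSetSetoid hA.setoid (Icc 1 s)

theorem mem_part_ofArcs (hA : IsArcSet s A) {x y : ℕ} :
    y ∈ (ofArcs hA).part x ↔ x ∈ Icc 1 s ∧ y ∈ Icc 1 s ∧ Linked A x y :=
  Finpartition.mem_part_ofSetSetoid_iff_rel _

theorem IsArcSet.reach_of_linked (hA : IsArcSet s A) {x y : ℕ} (h : Linked A x y) (hxy : x < y) :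
    Reach A x y :=
  h.resolve_right fun h' => (hA.le_of_reach h').not_gt hxy

theorem IsArcSet.snd_le_of_linked (hA : IsArcSet s A) {a : ℕ × ℕ} (ha : a ∈ A) {y : ℕ}
    (h : Linked A a.1 y) (hy : a.1 < y) : a.2 ≤ y := by
  rcases Relation.ReflTransGen.cases_head (hA.reach_of_linked h hy) with rfl | ⟨w, hw, hwy⟩
  · exact absurd hy (lt_irrefl _)
  · rw [hA.injOn_fst ha hw rfl]
    exact hA.le_of_reach hwy

end Linked

section Arcs

variable {n : ℕ}

noncomputable def arcs (P : Finpartition (Icc 1 n)) : Finset (ℕ × ℕ) :=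
  {a ∈ Icc 1 n ×ˢ Icc 1 n | IsArc P a}

variable {P : Finpartition (Icc 1 n)}

theorem mem_arcs {a : ℕ × ℕ} : a ∈ arcs P ↔ IsArc P a :=
  mem_filter.trans <| and_iff_right_of_imp fun ⟨_, _, hB, h₁, h₂, _⟩ =>
    mem_product.2 ⟨P.le hB h₁, P.le hB h₂⟩

theorem isArc_iff {i j : ℕ} :
    IsArc P (i, j) ↔ i < j ∧ j ∈ P.part i ∧ ∀ c ∈ P.part i, ¬ (i < c ∧ c < j) := by
  constructor
  · rintro ⟨hij, B, hB, hi, hj, hB'⟩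
    rw [P.part_eq_of_mem hB hi]
    exact ⟨hij, hj, hB'⟩
  · rintro ⟨hij, hj, h⟩
    have hi : i ∈ Icc 1 n := P.part_nonempty.1 ⟨j, hj⟩
    exact ⟨hij, _, P.part_mem.2 hi, P.mem_part hi, hj, h⟩

theorem isArcSet_arcs (P : Finpartition (Icc 1 n)) : IsArcSet n (arcs P) where
  bounds a ha := by
    have h₁ := (mem_product.1 (mem_filter.1 ha).1)
    have h₂ := (mem_arcs.1 ha).1
    simp only [mem_Icc] at h₁
    omega
  injOn_fst a ha b hb hab := by
    obtain ⟨hlta, B, hB, ha₁, ha₂, ha₃⟩ := mem_arcs.1 ha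
    obtain ⟨hltb, B', hB', hb₁, hb₂, hb₃⟩ := mem_arcs.1 hb
    obtain rfl := P.eq_of_mem_parts hB hB' ha₁ (hab ▸ hb₁)
    refine Prod.ext hab (le_antisymm ?_ ?_)
    · exact not_lt.1 fun h => ha₃ _ hb₂ ⟨hab.symm ▸ hltb, h⟩
    · exact not_lt.1 fun h => hb₃ _ ha₂ ⟨hab ▸ hlta, h⟩
  injOn_snd a ha b hb hab := by
    obtain ⟨hlta, B, hB, ha₁, ha₂, ha₃⟩ := mem_arcs.1 ha
    obtain ⟨hltb, B', hB', hb₁, hb₂, hb₃⟩ := mem_arcs.1 hb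
    obtain rfl := P.eq_of_mem_parts hB hB' ha₂ (hab ▸ hb₂)
    refine Prod.ext (le_antisymm ?_ ?_) hab
    · exact not_lt.1 fun h => hb₃ _ ha₁ ⟨h, hab.symm ▸ hlta⟩
    · exact not_lt.1 fun h => ha₃ _ hb₁ ⟨h, hab ▸ hltb⟩

theorem exists_isArc_of_lt {B : Finset ℕ} (hB : B ∈ P.parts) {x y : ℕ} (hx : x ∈ B) (hy : y ∈ B)
    (hxy : x < y) : ∃ z, IsArc P (x, z) := by
  have hne : {c ∈ B | x < c}.Nonempty := ⟨y, mem_filter.2 ⟨hy, hxy⟩⟩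
  obtain ⟨hz, hxz⟩ := mem_filter.1 ({c ∈ B | x < c}.min'_mem hne)
  refine ⟨_, hxz, B, hB, hx, hz, fun c hc ⟨hxc, hcz⟩ => ?_⟩
  exact (min'_le _ c (mem_filter.2 ⟨hc, hxc⟩)).not_gt hcz

theorem exists_isArc_of_gt {B : Finset ℕ} (hB : B ∈ P.parts) {x y : ℕ} (hx : x ∈ B) (hy : y ∈ B)
    (hyx : y < x) : ∃ w ∈ B, y ≤ w ∧ IsArc P (w, x) := by
  have hne : {c ∈ B | c < x}.Nonempty := ⟨y, mem_filter.2 ⟨hy, hyx⟩⟩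
  obtain ⟨hw, hwx⟩ := mem_filter.1 ({c ∈ B | c < x}.max'_mem hne)
  refine ⟨_, hw, le_max' _ _ (mem_filter.2 ⟨hy, hyx⟩), hwx, B, hB, hw, hx, ?_⟩
  exact fun c hc ⟨hwc, hcx⟩ => (le_max' _ c (mem_filter.2 ⟨hc, hcx⟩)).not_gt hwc

theorem reach_arcs {B : Finset ℕ} (hB : B ∈ P.parts) {x y : ℕ} (hx : x ∈ B) (hy : y ∈ B)
    (hxy : x ≤ y) : Reach (arcs P) x y := by
  induction y using Nat.strong_induction_on with
  | _ y ih =>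
    obtain rfl | hxy := hxy.eq_or_lt
    · exact .refl
    obtain ⟨w, hw, hxw, hwy⟩ := exists_isArc_of_gt hB hy hx hxy
    exact (ih w hwy.1 hw hxw).tail (mem_arcs.2 hwy)

theorem part_eq_part_of_reach {x y : ℕ} (h : Reach (arcs P) x y) : P.part x = P.part y := by
  induction h with
  | refl => rfl
  | tail _ hbc ih =>
    obtain ⟨-, B, hB, hb, hc, -⟩ := mem_arcs.1 hbc
    rw [ih, P.part_eq_of_mem hB hb, P.part_eq_of_mem hB hc]

theorem linked_arcs_iff {x y : ℕ} (hx : x ∈ Icc 1 n) : Linked (arcs P) x y ↔ y ∈ P.part x := by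
  constructor
  · intro h
    have hxy : P.part x = P.part y :=
      h.elim part_eq_part_of_reach fun h => (part_eq_part_of_reach h).symm
    exact hxy ▸ P.mem_part (P.part_nonempty.1 (hxy ▸ ⟨x, P.mem_part hx⟩))
  · intro hy
    have hB := P.part_mem.2 hx
    rcases le_total x y with hxy | hyx
    · exact .inl (reach_arcs hB (P.mem_part hx) hy hxy)
    · exact .inr (reach_arcs hB hy (P.mem_part hx) hyx)

theorem ofArcs_arcs (P : Finpartition (Icc 1 n)) : ofArcs (isArcSet_arcs P) = P :=
  Finpartition.ext_of_part fun x hx => by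
    ext y
    rw [mem_part_ofArcs, linked_arcs_iff hx]
    exact ⟨fun h => h.2.2, fun h => ⟨hx, P.part_subset x h, h⟩⟩

end Arcs

section Bijection

variable {s n : ℕ} {A : Finset (ℕ × ℕ)}

theorem arcs_ofArcs (hA : IsArcSet s A) : arcs (ofArcs hA) = A := by
  ext ⟨i, j⟩
  simp only [mem_arcs, isArc_iff, mem_part_ofArcs]
  constructor
  · rintro ⟨hij, ⟨hi, -, hl⟩, hgap⟩
    rcases Relation.ReflTransGen.cases_head (hA.reach_of_linked hl hij) with rfl | ⟨w, hw, hwj⟩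
    · exact absurd hij (lt_irrefl _)
    have hw' : w ∈ Icc 1 s := by
      have := hA.bounds _ hw
      simp only [mem_Icc]
      omega
    obtain rfl : w = j := (hA.le_of_reach hwj).antisymm <| not_lt.1 fun hwj' =>
      hgap w ⟨hi, hw', .inl (.single hw)⟩ ⟨(hA.bounds _ hw).2.1, hwj'⟩
    exact hw
  · intro h
    have := hA.bounds _ h
    refine ⟨this.2.1, ⟨hA.fst_mem_Icc h, ?_, .inl (.single h)⟩, fun c ⟨_, _, hc⟩ ⟨hic, hcj⟩ =>
      (hA.snd_le_of_linked h hc hic).not_gt hcj⟩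
    simp only [mem_Icc]
    omega

theorem arcs_injective : Function.Injective (arcs (n := n)) := fun P Q h => by
  rw [← ofArcs_arcs P, ← ofArcs_arcs Q]
  congr

theorem ncard_eq_card_filter_arcSets (Φ : Finpartition (Icc 1 n) → Prop)
    (Ψ : Finset (ℕ × ℕ) → Prop) [DecidablePred Ψ] (h : ∀ P, Φ P ↔ Ψ (arcs P)) :
    {P | Φ P}.ncard = #{A ∈ arcSets n | Ψ A} := by
  rw [← Set.ncard_image_of_injective _ arcs_injective, ← Set.ncard_coe_finset]
  congr 1
  ext A
  simp only [Set.mem_image, Set.mem_ofPred_eq, coe_filter, mem_arcSets, h]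
  exact ⟨fun ⟨P, hP, hPA⟩ => hPA ▸ ⟨isArcSet_arcs P, hP⟩,
    fun ⟨hA, hΨ⟩ => ⟨ofArcs hA, (arcs_ofArcs hA).symm ▸ hΨ, arcs_ofArcs hA⟩⟩

end Bijection

/-- The arc sets of the partial matchings counted by `Qnum`. -/
structure IsQMatching (A : Finset (ℕ × ℕ)) : Prop where
  snd_ne_fst : ∀ a ∈ A, ∀ b ∈ A, a.2 ≠ b.1
  snd_add_one_ne_fst : ∀ a ∈ A, ∀ b ∈ A, a.2 + 1 ≠ b.1
  snd_le_snd : ∀ a ∈ A, ∀ b ∈ A, a.1 + 1 = b.1 → a.2 ≤ b.2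

theorem isQMatching_iff {A : Finset (ℕ × ℕ)} : IsQMatching A ↔
    (∀ a ∈ A, ∀ b ∈ A, a.2 ≠ b.1) ∧ (∀ a ∈ A, ∀ b ∈ A, a.2 + 1 ≠ b.1) ∧
      ∀ a ∈ A, ∀ b ∈ A, a.1 + 1 = b.1 → a.2 ≤ b.2 :=
  ⟨fun ⟨h₁, h₂, h₃⟩ => ⟨h₁, h₂, h₃⟩, fun ⟨h₁, h₂, h₃⟩ => ⟨h₁, h₂, h₃⟩⟩

section Transfer

variable {n : ℕ} {P : Finpartition (Icc 1 n)}

theorem numArcs_eq_card_arcs : numArcs P = #(arcs P) := by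
  rw [numArcs, ← Set.ncard_coe_finset]
  congr
  ext a
  exact mem_arcs.symm

/-- Each point is either the right endpoint of an arc or the least element of its block. -/
theorem card_arcs_add_card_parts (P : Finpartition (Icc 1 n)) : #(arcs P) + #P.parts = n := by
  have h₁ : #(arcs P) = #{x ∈ Icc 1 n | ∃ y ∈ P.part x, y < x} := by
    refine card_nbij Prod.snd (fun a ha => ?_) (isArcSet_arcs P).injOn_snd fun x hx => ?_
    · obtain ⟨hlt, hpart, -⟩ := isArc_iff.1 (mem_arcs.1 ha)
      have ha₁ : a.1 ∈ Icc 1 n := P.part_nonempty.1 ⟨_, hpart⟩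
      refine mem_filter.2 ⟨P.part_subset _ hpart, a.1, ?_, hlt⟩
      rw [P.part_eq_of_mem (P.part_mem.2 ha₁) hpart]
      exact P.mem_part ha₁
    · obtain ⟨hx, y, hy, hyx⟩ := mem_filter.1 hx
      obtain ⟨w, -, -, hw⟩ := exists_isArc_of_gt (P.part_mem.2 hx) (P.mem_part hx) hy hyx
      exact ⟨(w, x), mem_arcs.2 hw, rfl⟩
  have h₂ : #P.parts = #{x ∈ Icc 1 n | ¬ ∃ y ∈ P.part x, y < x} := by
    refine (card_nbij P.part (fun x hx => P.part_mem.2 (mem_filter.1 hx).1) ?_ ?_).symm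
    · intro x hx x' hx' h
      simp only [coe_filter, Set.mem_ofPred_eq, not_exists, not_and, not_lt] at hx hx'
      exact le_antisymm (hx.2 x' (h ▸ P.mem_part hx'.1)) (hx'.2 x (h ▸ P.mem_part hx.1))
    · intro B hB
      have hB' := P.nonempty_of_mem_parts hB
      have hmin : P.part (B.min' hB') = B := P.part_eq_of_mem hB (B.min'_mem hB')
      refine ⟨B.min' hB', mem_filter.2 ⟨P.le hB (B.min'_mem hB'), ?_⟩, hmin⟩
      rw [hmin]
      exact fun ⟨y, hy, hlt⟩ => (B.min'_le y hy).not_gt hlt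
  rw [h₁, h₂, card_filter_add_card_filter_not, Nat.card_Icc, Nat.add_sub_cancel]

theorem isMatching_iff : IsMatching P ↔ ∀ a ∈ arcs P, ∀ b ∈ arcs P, a.2 ≠ b.1 := by
  constructor
  · intro hP a ha b hb hab
    obtain ⟨hlta, B, hB, ha₁, ha₂, -⟩ := mem_arcs.1 ha
    obtain ⟨hltb, B', hB', hb₁, hb₂, -⟩ := mem_arcs.1 hb
    obtain rfl := P.eq_of_mem_parts hB hB' ha₂ (hab ▸ hb₁)
    have : 2 < #B := two_lt_card.2 ⟨_, ha₁, _, ha₂, _, hb₂, by omega, by omega, by omega⟩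
    exact absurd (hP B hB) (by omega)
  · intro h B hB
    by_contra! hcard
    obtain ⟨x, hx, y, hy, z, hz, hxy, hyz⟩ := exists_lt_lt_of_two_lt_card hcard
    obtain ⟨w, -, -, hw⟩ := exists_isArc_of_gt hB hy hx hxy
    obtain ⟨w', hw'⟩ := exists_isArc_of_lt hB hy hz hyz
    exact h _ (mem_arcs.2 hw) _ (mem_arcs.2 hw') rfl

theorem isQMatching_arcs_iff :
    IsQMatching (arcs P) ↔ IsMatching P ∧ ¬ HasNbrAlign P ∧ ¬ HasLeftNesting P := by
  simp only [isMatching_iff, HasNbrAlign, HasLeftNesting, ← mem_arcs, not_exists, not_and,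
    not_lt]
  exact ⟨fun ⟨h₁, h₂, h₃⟩ => ⟨h₁, fun a b ha hb => h₂ a ha b hb, fun a b ha hb => h₃ a ha b hb⟩,
    fun ⟨h₁, h₂, h₃⟩ => ⟨h₁, fun a ha b hb => h₂ a b ha hb, fun a ha b hb => h₃ a b ha hb⟩⟩

end Transfer

theorem Stirling_eq_card (s b : ℕ) : Stirling s b = #{A ∈ arcSets s | #A + b = s} := by
  rw [Stirling]
  exact ncard_eq_card_filter_arcSets _ _ fun P => by
    have := card_arcs_add_card_parts P
    omega

theorem Qnum_eq_card (m k : ℕ) : Qnum m k = #{A ∈ arcSets m | IsQMatching A ∧ #A = k} := by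
  rw [Qnum]
  exact ncard_eq_card_filter_arcSets _ _ fun P => by
    rw [isQMatching_arcs_iff, numArcs_eq_card_arcs]
    tauto

/-- An arc set on `{1, ..., s + 1}` with an arc `(j, s + 1)` is an arc set on `{1, ..., s}`
plus that arc, where `j` is any of the `s - #A` points that are not left endpoints. -/
theorem card_filter_arcSets_of_last_arc (s b : ℕ) :
    #{A ∈ arcSets (s + 1) | #A + (b + 1) = s + 1 ∧ ∃ j, (j, s + 1) ∈ A} =
      (b + 1) * #{A ∈ arcSets s | #A + (b + 1) = s} := by
  set S := {A ∈ arcSets s | #A + (b + 1) = s}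
  have hsnd {A : Finset (ℕ × ℕ)} (hA : IsArcSet s A) : ∀ a ∈ A, a.2 < s + 1 :=
    fun a ha => Nat.lt_succ_of_le (hA.bounds a ha).2.2
  calc _ = #(S.sigma fun A => Icc 1 s \ A.image Prod.fst) := by
        refine (card_bij (fun p _ => insert (p.2, s + 1) p.1) ?_ ?_ ?_).symm
        · rintro ⟨A, j⟩ hp
          simp only [mem_sigma, mem_filter, mem_arcSets, mem_sdiff, S] at hp ⊢
          obtain ⟨⟨hA, hcard⟩, hj, hj'⟩ := hp
          rw [card_insert_of_notMem fun h => (hsnd hA _ h).ne rfl]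
          exact ⟨hA.insert_last hj hj', by omega, j, mem_insert_self _ _⟩
        · rintro ⟨A, j⟩ hp ⟨A', j'⟩ hp' h
          simp only [mem_sigma, mem_filter, mem_arcSets, S] at hp hp'
          obtain ⟨rfl, rfl⟩ := insert_injective_of_snd_lt (hsnd hp.1.1) (hsnd hp'.1.1) h
          rfl
        · intro B hB
          obtain ⟨hB, hcard, j, hj⟩ := (mem_filter.1 hB).imp_left mem_arcSets.1
          obtain ⟨hA, hj₁, hj₂⟩ := hB.erase_last hj
          have := card_erase_add_one hj
          refine ⟨⟨B.erase (j, s + 1), j⟩, ?_, insert_erase hj⟩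
          simp only [mem_sigma, mem_filter, mem_arcSets, mem_sdiff, S]
          exact ⟨⟨hA, by omega⟩, hj₁, hj₂⟩
    _ = (b + 1) * #S := by
        rw [card_sigma, sum_const_nat fun A hA => ?_, mul_comm]
        obtain ⟨hA, hcard⟩ := (mem_filter.1 hA).imp_left mem_arcSets.1
        rw [hA.card_sdiff_image_fst]
        omega

theorem Stirling_succ_succ (s b : ℕ) :
    Stirling (s + 1) (b + 1) = Stirling s b + (b + 1) * Stirling s (b + 1) := by
  simp only [Stirling_eq_card]
  rw [card_filter_arcSets_succ, card_filter_arcSets_of_last_arc]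
  congr 2
  exact filter_congr fun A _ => by omega

theorem Stirling_eq_stirlingSecond : ∀ s b, Stirling s b = Nat.stirlingSecond s b
  | 0, b => by
    cases b <;> simp [Stirling_eq_card, arcSets_zero, filter_singleton]
  | s + 1, 0 => by
    rw [Stirling_eq_card, Nat.stirlingSecond_succ_zero, card_eq_zero, filter_eq_empty_iff]
    exact fun A hA h => ((mem_arcSets.1 hA).card_lt (by omega)).ne (by omega)
  | s + 1, b + 1 => by
    rw [Stirling_succ_succ, Nat.stirlingSecond_succ_succ, Stirling_eq_stirlingSecond s b,
      Stirling_eq_stirlingSecond s (b + 1), add_comm]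

/-- `shift t` makes room for a new point `t`. -/
def shift (t x : ℕ) : ℕ := if t ≤ x then x + 1 else x

def unshift (t x : ℕ) : ℕ := if t < x then x - 1 else x

section Shift

variable {m t x y : ℕ}

theorem shift_lt_shift : shift t x < shift t y ↔ x < y := by
  unfold shift; split_ifs <;> omega

theorem shift_le_shift : shift t x ≤ shift t y ↔ x ≤ y := by
  unfold shift; split_ifs <;> omega

theorem shift_inj : shift t x = shift t y ↔ x = y := by
  unfold shift; split_ifs <;> omega

theorem shift_ne : shift t x ≠ t := by
  unfold shift; split_ifs <;> omega

theorem shift_add_one_eq_shift : shift t x + 1 = shift t y ↔ x + 1 = y ∧ y ≠ t := by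
  unfold shift; split_ifs <;> omega

theorem shift_add_one_eq : shift t x + 1 = t ↔ x + 1 = t := by
  unfold shift; split_ifs <;> omega

theorem add_one_eq_shift : t + 1 = shift t y ↔ y = t := by
  unfold shift; split_ifs <;> omega

theorem shift_le_add_one (h : x ≤ m) : shift t x ≤ m + 1 := by
  unfold shift; split_ifs <;> omega

theorem shift_unshift (h : x ≠ t) : shift t (unshift t x) = x := by
  unfold shift unshift; split_ifs <;> omega

theorem shift_injective : Function.Injective (shift t) := fun _ _ => shift_inj.1

theorem isArcSet_image_shift_iff (ht : t ∈ Icc 1 (m + 1)) {A : Finset (ℕ × ℕ)} :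
    IsArcSet (m + 1) (A.image (Prod.map (shift t) (shift t))) ↔ IsArcSet m A := by
  have hinj : Function.Injective (Prod.map (shift t) (shift t)) :=
    Prod.map_injective.2 ⟨shift_injective, shift_injective⟩
  simp only [mem_Icc] at ht
  constructor
  · intro h
    refine ⟨fun a ha => ?_, fun a ha b hb hab => hinj ?_, fun a ha b hb hab => hinj ?_⟩
    · have := h.bounds _ (mem_image_of_mem _ ha)
      simp only [Prod.map_fst, Prod.map_snd, shift_lt_shift] at this
      unfold shift at this
      split_ifs at this <;> omega
    · exact h.injOn_fst (mem_image_of_mem _ ha) (mem_image_of_mem _ hb) (congrArg (shift t) hab)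
    · exact h.injOn_snd (mem_image_of_mem _ ha) (mem_image_of_mem _ hb) (congrArg (shift t) hab)
  · intro h
    refine ⟨forall_mem_image.2 fun a ha => ?_, ?_, ?_⟩
    · have := h.bounds a ha
      simp only [Prod.map_fst, Prod.map_snd, shift_lt_shift]
      unfold shift
      split_ifs <;> omega
    · rintro _ ha' _ hb' hab
      obtain ⟨a, ha, rfl⟩ := mem_image.1 ha'
      obtain ⟨b, hb, rfl⟩ := mem_image.1 hb'
      rw [h.injOn_fst ha hb (shift_injective hab)]
    · rintro _ ha' _ hb' hab
      obtain ⟨a, ha, rfl⟩ := mem_image.1 ha'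
      obtain ⟨b, hb, rfl⟩ := mem_image.1 hb'
      rw [h.injOn_snd ha hb (shift_injective hab)]

theorem image_shift_image_unshift {C : Finset (ℕ × ℕ)} (h : ∀ c ∈ C, c.1 ≠ t ∧ c.2 ≠ t) :
    (C.image (Prod.map (unshift t) (unshift t))).image (Prod.map (shift t) (shift t)) = C := by
  rw [image_image]
  refine (image_congr fun c hc => ?_).trans image_id
  exact Prod.ext (shift_unshift (h c hc).1) (shift_unshift (h c hc).2)

end Shift

/-- Insert a new point `t` into `{1, ..., m + 1}` and an arc from it to the new last point. -/
def insertArc (m t : ℕ) (A : Finset (ℕ × ℕ)) : Finset (ℕ × ℕ) :=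
  insert (t, m + 2) (A.image (Prod.map (shift t) (shift t)))

/-- The new arc `(t, m + 2)` is the outer arc of a left nesting exactly when `t` is a left endpoint
of `A`, and it closes a neighbor alignment exactly when `t - 1` is a right endpoint of `A`. -/
theorem isQMatching_insertArc_iff {m t : ℕ} (ht : t ≤ m + 1) {A : Finset (ℕ × ℕ)}
    (hA : IsArcSet m A) :
    IsQMatching (insertArc m t A) ↔ IsQMatching A ∧ ∀ a ∈ A, a.1 ≠ t ∧ a.2 + 1 ≠ t := by
  have h₁ : ∀ a ∈ A, shift t a.1 + 1 < m + 2 := fun a ha => by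
    have := shift_lt_shift (t := t) |>.2 (hA.bounds a ha).2.1
    have := shift_le_add_one (t := t) (hA.bounds a ha).2.2
    omega
  have h₂ : ∀ a ∈ A, shift t a.2 < m + 2 := fun a ha =>
    Nat.lt_succ_of_le (shift_le_add_one (hA.bounds a ha).2.2)
  simp only [insertArc, isQMatching_iff, forall_mem_insert, mem_image, forall_exists_index,
    and_imp, forall_apply_eq_imp_iff₂, Prod.map_fst, Prod.map_snd, shift_inj,
    shift_add_one_eq_shift, shift_add_one_eq, add_one_eq_shift, shift_le_shift, shift_ne,
    ne_eq, not_false_eq_true, true_and]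
  grind

section Slots

variable {m : ℕ} {A : Finset (ℕ × ℕ)}

theorem IsQMatching.two_mul_card_le (hQ : IsQMatching A) (hA : IsArcSet m A) : 2 * #A ≤ m := by
  have hdisj : Disjoint (A.image Prod.fst) (A.image Prod.snd) := disjoint_left.2 fun x hx hx' => by
    obtain ⟨a, ha, rfl⟩ := mem_image.1 hx
    obtain ⟨b, hb, hba⟩ := mem_image.1 hx'
    exact hQ.snd_ne_fst b hb a ha hba
  have hsub : A.image Prod.fst ∪ A.image Prod.snd ⊆ Icc 1 m :=
    union_subset (image_subset_iff.2 fun a ha => hA.fst_mem_Icc ha)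
      (image_subset_iff.2 fun a ha => Icc_subset_Icc_left (by norm_num) (hA.snd_mem_Icc ha))
  have := card_le_card hsub
  rw [card_union_of_disjoint hdisj, hA.card_image_fst, hA.card_image_snd, Nat.card_Icc] at this
  omega

theorem IsQMatching.card_slots (hQ : IsQMatching A) (hA : IsArcSet m A) :
    #{t ∈ Icc 1 (m + 1) | ∀ a ∈ A, a.1 ≠ t ∧ a.2 + 1 ≠ t} = m + 1 - 2 * #A := by
  have hdisj : Disjoint (A.image Prod.fst) (A.image (·.2 + 1)) := disjoint_left.2 fun x hx hx' => by
    obtain ⟨a, ha, rfl⟩ := mem_image.1 hx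
    obtain ⟨b, hb, hba⟩ := mem_image.1 hx'
    exact hQ.snd_add_one_ne_fst b hb a ha hba
  have hsub : A.image Prod.fst ∪ A.image (·.2 + 1) ⊆ Icc 1 (m + 1) := by
    refine union_subset (image_subset_iff.2 fun a ha => ?_) (image_subset_iff.2 fun a ha => ?_) <;>
    · have := hA.bounds a ha
      simp only [mem_Icc]
      omega
  have hslots : {t ∈ Icc 1 (m + 1) | ∀ a ∈ A, a.1 ≠ t ∧ a.2 + 1 ≠ t} =
      Icc 1 (m + 1) \ (A.image Prod.fst ∪ A.image (·.2 + 1)) := by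
    ext t
    simp only [mem_filter, mem_sdiff, mem_union, mem_image, not_or, not_exists, not_and]
    exact and_congr_right fun _ => ⟨fun h => ⟨fun a ha => (h a ha).1, fun a ha => (h a ha).2⟩,
      fun h a ha => ⟨h.1 a ha, h.2 a ha⟩⟩
  rw [hslots, card_sdiff_of_subset hsub, card_union_of_disjoint hdisj, hA.card_image_fst,
    card_image_of_injOn fun a ha b hb h => hA.injOn_snd ha hb (Nat.add_right_cancel h),
    Nat.card_Icc]
  omega

end Slots

section InsertArc

variable {m t : ℕ} {A : Finset (ℕ × ℕ)}

theorem snd_lt_of_mem_image_shift (hA : IsArcSet m A) :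
    ∀ a ∈ A.image (Prod.map (shift t) (shift t)), a.2 < m + 2 :=
  forall_mem_image.2 fun a ha => Nat.lt_succ_of_le (shift_le_add_one (hA.bounds a ha).2.2)

theorem isArcSet_insertArc (hA : IsArcSet m A) (ht : t ∈ Icc 1 (m + 1)) :
    IsArcSet (m + 2) (insertArc m t A) := by
  refine ((isArcSet_image_shift_iff ht).2 hA).insert_last ht fun h => ?_
  obtain ⟨_, ha, h⟩ := mem_image.1 h
  obtain ⟨a, -, rfl⟩ := mem_image.1 ha
  exact shift_ne h

theorem card_insertArc (hA : IsArcSet m A) : #(insertArc m t A) = #A + 1 := by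
  rw [insertArc, card_insert_of_notMem fun h => (snd_lt_of_mem_image_shift hA _ h).ne rfl,
    card_image_of_injective _ (Prod.map_injective.2 ⟨shift_injective, shift_injective⟩)]

theorem insertArc_inj {t' : ℕ} {A' : Finset (ℕ × ℕ)} (hA : IsArcSet m A) (hA' : IsArcSet m A')
    (h : insertArc m t A = insertArc m t' A') : t = t' ∧ A = A' := by
  obtain ⟨rfl, h⟩ := insert_injective_of_snd_lt (snd_lt_of_mem_image_shift hA)
    (snd_lt_of_mem_image_shift hA') h
  exact ⟨rfl, image_injective (Prod.map_injective.2 ⟨shift_injective, shift_injective⟩) h⟩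

/-- The point `t` is used only by the arc `(t, m + 2)`, so it can be removed. -/
theorem exists_insertArc_eq {B : Finset (ℕ × ℕ)} (hB : IsArcSet (m + 2) B) (hQ : IsQMatching B)
    (ht : (t, m + 2) ∈ B) : t ∈ Icc 1 (m + 1) ∧ ∃ A, IsArcSet m A ∧ insertArc m t A = B := by
  obtain ⟨hC, htI, htC⟩ := hB.erase_last ht
  have hCt : ∀ c ∈ B.erase (t, m + 2), c.1 ≠ t ∧ c.2 ≠ t := fun c hc =>
    ⟨fun h => htC (mem_image.2 ⟨c, hc, h⟩), hQ.snd_ne_fst c (mem_of_mem_erase hc) _ ht⟩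
  have hAC := image_shift_image_unshift hCt
  refine ⟨htI, _, (isArcSet_image_shift_iff htI).1 (hAC ▸ hC), ?_⟩
  rw [insertArc, hAC, insert_erase ht]

end InsertArc

theorem card_filter_qMatching_of_last_arc (m k : ℕ) :
    #{A ∈ arcSets (m + 2) | (IsQMatching A ∧ #A = k + 1) ∧ ∃ t, (t, m + 2) ∈ A} =
      (m + 1 - 2 * k) * #{A ∈ arcSets m | IsQMatching A ∧ #A = k} := by
  set S := {A ∈ arcSets m | IsQMatching A ∧ #A = k}
  calc _ = #(S.sigma fun A => {t ∈ Icc 1 (m + 1) | ∀ a ∈ A, a.1 ≠ t ∧ a.2 + 1 ≠ t}) := by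
        refine (card_bij (fun p _ => insertArc m p.2 p.1) ?_ ?_ ?_).symm
        · rintro ⟨A, t⟩ hp
          simp only [mem_sigma, mem_filter, mem_arcSets, S] at hp ⊢
          obtain ⟨⟨hA, hQ, rfl⟩, ht, hslot⟩ := hp
          refine ⟨isArcSet_insertArc hA ht, ⟨?_, card_insertArc hA⟩, t, mem_insert_self _ _⟩
          exact (isQMatching_insertArc_iff (mem_Icc.1 ht).2 hA).2 ⟨hQ, hslot⟩
        · rintro ⟨A, t⟩ hp ⟨A', t'⟩ hp' h
          simp only [mem_sigma, mem_filter, mem_arcSets, S] at hp hp'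
          obtain ⟨rfl, rfl⟩ := insertArc_inj hp.1.1 hp'.1.1 h
          rfl
        · intro B hB
          obtain ⟨hB, ⟨hQ, hcard⟩, t, ht⟩ := (mem_filter.1 hB).imp_left mem_arcSets.1
          obtain ⟨htI, A, hA, rfl⟩ := exists_insertArc_eq hB hQ ht
          obtain ⟨hQA, hslot⟩ := (isQMatching_insertArc_iff (mem_Icc.1 htI).2 hA).1 hQ
          refine ⟨⟨A, t⟩, ?_, rfl⟩
          simp only [mem_sigma, mem_filter, mem_arcSets, S]
          exact ⟨⟨hA, hQA, by rw [card_insertArc hA] at hcard; omega⟩, htI, hslot⟩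
    _ = (m + 1 - 2 * k) * #S := by
        rw [card_sigma, sum_const_nat fun A hA => ?_, mul_comm]
        obtain ⟨hA', hQ, rfl⟩ := (mem_filter.1 hA).imp_left mem_arcSets.1
        exact hQ.card_slots hA'

theorem Qnum_add_two_succ (m k : ℕ) :
    Qnum (m + 2) (k + 1) = Qnum (m + 1) (k + 1) + (m + 1 - 2 * k) * Qnum m k := by
  simp only [Qnum_eq_card]
  rw [card_filter_arcSets_succ, card_filter_qMatching_of_last_arc]

theorem Qnum_zero_right (m : ℕ) : Qnum m 0 = 1 := by
  rw [Qnum_eq_card, card_eq_one]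
  refine ⟨∅, eq_singleton_iff_unique_mem.2 ⟨?_, fun A hA => card_eq_zero.1 (mem_filter.1 hA).2.2⟩⟩
  exact mem_filter.2 ⟨mem_arcSets.2 (isArcSet_empty m), ⟨by simp, by simp, by simp⟩, rfl⟩

theorem Qnum_eq_zero_of_lt {m k : ℕ} (h : m < 2 * k) : Qnum m k = 0 := by
  rw [Qnum_eq_card, card_eq_zero, filter_eq_empty_iff]
  rintro A hA ⟨hQ, rfl⟩
  exact absurd (hQ.two_mul_card_le (mem_arcSets.1 hA)) (by omega)

theorem Qnum_eq_stirlingSecond :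
    ∀ k j : ℕ, Qnum (2 * k + j) k = Nat.stirlingSecond (k + j + 1) (j + 1)
  | 0, j => by rw [Qnum_zero_right, zero_add, Nat.stirlingSecond_self]
  | k + 1, 0 => by
    have h := Qnum_add_two_succ (2 * k) k
    rw [Qnum_eq_zero_of_lt (m := 2 * k + 1) (k := k + 1) (by omega),
      show 2 * k + 1 - 2 * k = 1 by omega, one_mul, zero_add] at h
    have ih := Qnum_eq_stirlingSecond k 0
    simp only [add_zero, zero_add] at ih ⊢
    rw [show 2 * (k + 1) = 2 * k + 2 by ring, h, ih, Nat.stirlingSecond_one_right,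
      Nat.stirlingSecond_one_right]
  | k + 1, j + 1 => by
    have h := Qnum_add_two_succ (2 * k + (j + 1)) k
    rw [show 2 * k + (j + 1) + 1 - 2 * k = j + 2 by omega,
      show 2 * k + (j + 1) + 1 = 2 * (k + 1) + j by ring, Qnum_eq_stirlingSecond (k + 1) j,
      Qnum_eq_stirlingSecond k (j + 1),
      show 2 * k + (j + 1) + 2 = 2 * (k + 1) + (j + 1) by ring] at h
    rw [h, show k + 1 + (j + 1) + 1 = k + j + 2 + 1 by ring,
      Nat.stirlingSecond_succ_succ (k + j + 2) (j + 1)]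
    ring_nf

theorem ncard_eq_sum_Qnum (m : ℕ) :
    {P : Finpartition (Icc 1 m) | IsMatching P ∧ ¬ HasNbrAlign P ∧ ¬ HasLeftNesting P}.ncard =
      ∑ k ∈ range (m / 2 + 1), Qnum m k := by
  rw [ncard_eq_card_filter_arcSets _ IsQMatching fun P => isQMatching_arcs_iff.symm,
    card_eq_sum_card_fiberwise (f := card) (t := range (m / 2 + 1)) fun A hA => ?_]
  · refine sum_congr rfl fun k _ => ?_
    rw [Qnum_eq_card, filter_filter]
  · obtain ⟨hA, hQ⟩ := mem_filter.1 hA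
    have := hQ.two_mul_card_le (mem_arcSets.1 hA)
    rw [coe_range, Set.mem_Iio]
    omega

end ArcDiagram

/-- The total number of partial matchings of `[n-1]` avoiding neighbor
alignments and left nestings equals `∑_{k=0}^{⌊(n-1)/2⌋} S(n-k, n-2k)`. -/
theorem stmt_15 (n : ℕ) (hn : 1 ≤ n) :
    {P : Finpartition (Finset.Icc 1 (n - 1)) |
        IsMatching P ∧ ¬ HasNbrAlign P ∧ ¬ HasLeftNesting P}.ncard =
      ∑ k ∈ Finset.range ((n - 1) / 2 + 1), Stirling (n - k) (n - 2 * k) := by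
  obtain ⟨m, rfl⟩ : ∃ m, n = m + 1 := ⟨n - 1, by omega⟩
  rw [Nat.add_sub_cancel, ArcDiagram.ncard_eq_sum_Qnum]
  refine Finset.sum_congr rfl fun k hk => ?_
  obtain ⟨j, rfl⟩ : ∃ j, m = 2 * k + j := ⟨m - 2 * k, by rw [Finset.mem_range] at hk; omega⟩
  rw [ArcDiagram.Qnum_eq_stirlingSecond, ArcDiagram.Stirling_eq_stirlingSecond]
  congr 1 <;> omega
end
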